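/- arXiv:1606.00279 — 4 statements merged into one kernel-verified Lean document; each statement's English description precedes it below -/
import Mathlib

section
/- Let B(r) be a matrix-valued function of one real variable r of the form B(r) = B_0 + r·e_j·e_m^T, invertible at some r_0. If (B(r_0)^{-1})_{β j} ≠ 0 and (B(r_0)^{-1})_{m α} ≠ 0, then the function r ↦ (B(r)^{-1})_{β α} is not identically zero near r_0. -/
/-!
The resolvent identity `B(r)⁻¹ - B(r₀)⁻¹ = B(r)⁻¹ (B(r₀) - B(r)) B(r₀)⁻¹` with the rank-one
difference `B(r₀) - B(r) = (r₀ - r) eⱼ eₘᵀ` gives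
`(B(r)⁻¹)_{βα} - (B(r₀)⁻¹)_{βα} = -(r - r₀) (B(r)⁻¹)_{βj} (B(r₀)⁻¹)_{mα}`.
By continuity of the inverse the right-hand side is nonzero for all `r ≠ r₀` close to `r₀`,
so the entry `(B(r)⁻¹)_{βα}` cannot vanish at both `r₀` and all nearby `r`.
-/

open Filter Topology Matrix

namespace Matrix

variable {n : Type*} [Fintype n] [DecidableEq n]

theorem mul_single_mul_apply {R : Type*} [CommRing R] (M N : Matrix n n R) (i j k l : n) (c : R) :
    (M * single j k c * N) i l = M i j * c * N k l := by
  rw [mul_apply, Finset.sum_eq_single k]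
  · rw [mul_single_apply_same]
  · intro b _ hb
    rw [mul_single_apply_of_ne (hbj := hb), zero_mul]
  · simp

theorem inv_add_smul_single_apply_sub_inv {R : Type*} [CommRing R] (B₀ : Matrix n n R)
    (j m β α : n) {r r₀ : R} (hr : IsUnit (B₀ + r • single j m (1 : R)).det)
    (hr₀ : IsUnit (B₀ + r₀ • single j m (1 : R)).det) :
    (B₀ + r • single j m (1 : R))⁻¹ β α - (B₀ + r₀ • single j m (1 : R))⁻¹ β α =
      -(r - r₀) *
        ((B₀ + r • single j m (1 : R))⁻¹ β j * (B₀ + r₀ • single j m (1 : R))⁻¹ m α) := by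
  have hdiff :
      B₀ + r₀ • single j m (1 : R) - (B₀ + r • single j m 1) = single j m (-(r - r₀)) := by
    rw [add_sub_add_left_eq_sub, ← sub_smul, smul_single, smul_eq_mul, mul_one, neg_sub]
  rw [← sub_apply, inv_sub_inv (by simp only [isUnit_iff_isUnit_det, hr, hr₀]), hdiff,
    mul_single_mul_apply]
  ring

variable {K : Type*} [Field K] [TopologicalSpace K] [IsTopologicalDivisionRing K]

theorem eventually_isUnit_det_add_smul [T1Space K] (B₀ C : Matrix n n K) {r₀ : K}
    (h : IsUnit (B₀ + r₀ • C).det) : ∀ᶠ r in 𝓝 r₀, IsUnit (B₀ + r • C).det := by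
  simp only [isUnit_iff_ne_zero] at h ⊢
  have hcont : Continuous fun r : K => (B₀ + r • C).det := by fun_prop
  exact hcont.continuousAt.eventually_ne h

theorem continuousAt_inv_add_smul (B₀ C : Matrix n n K) {r₀ : K}
    (h : IsUnit (B₀ + r₀ • C).det) : ContinuousAt (fun r => (B₀ + r • C)⁻¹) r₀ := by
  refine ContinuousAt.comp (f := fun r : K => B₀ + r • C) (continuousAt_matrix_inv _ ?_) ?_
  · rw [Ring.inverse_eq_inv']
    exact continuousAt_inv₀ h.ne_zero
  · fun_prop

end Matrix

theorem not_eventually_zero {n : Type*} [Fintype n] [DecidableEq n]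
    (B₀ : Matrix n n ℝ) (j m β α : n) (r₀ : ℝ)
    (hinv : IsUnit (B₀ + r₀ • Matrix.single j m (1 : ℝ)).det)
    (h1 : (B₀ + r₀ • Matrix.single j m (1 : ℝ))⁻¹ β j ≠ 0)
    (h2 : (B₀ + r₀ • Matrix.single j m (1 : ℝ))⁻¹ m α ≠ 0) :
    ¬ ∀ᶠ r in nhds r₀, (B₀ + r • Matrix.single j m (1 : ℝ))⁻¹ β α = 0 := by
  intro hzero
  have hβj : ∀ᶠ r in 𝓝 r₀, (B₀ + r • single j m (1 : ℝ))⁻¹ β j ≠ 0 :=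
    ((continuous_apply_apply β j).continuousAt.comp
      (continuousAt_inv_add_smul B₀ _ hinv)).eventually_ne h1
  have hconst : ∀ᶠ r in 𝓝 r₀, r = r₀ := by
    filter_upwards [hzero, hβj, eventually_isUnit_det_add_smul B₀ _ hinv] with r hr hrβj hdet
    have key := inv_add_smul_single_apply_sub_inv B₀ j m β α hdet hinv
    rw [hr, hzero.self_of_nhds, sub_zero, eq_comm, mul_eq_zero, neg_eq_zero, sub_eq_zero] at key
    exact key.resolve_right (mul_ne_zero hrβj h2)
  have hfalse : ∀ᶠ r in 𝓝[≠] r₀, False := by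
    filter_upwards [nhdsWithin_le_nhds hconst, self_mem_nhdsWithin] with r h hne using hne h
  exact hfalse.exists.elim fun _ => id
end

section
/- (Schwartz–Zippel) Let F be a field, q : F^N → F a nonzero polynomial of total degree at most M, and T ⊆ F a finite nonempty set. Then the number of points x ∈ T^N with q(x) = 0 is at most M·|T|^{N-1}; equivalently, the probability that a uniformly random x ∈ T^N satisfies q(x)=0 is at most M/|T|. -/
open Finset

theorem MvPolynomial.card_zeros_mul_card_le_totalDegree_mul {R : Type*} [CommRing R] [IsDomain R]
    [DecidableEq R] {n : ℕ} {p : MvPolynomial (Fin n) R} (hp : p ≠ 0) (S : Finset R) :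
    #{x ∈ Fintype.piFinset fun _ ↦ S | eval x p = 0} * #S ≤ p.totalDegree * #S ^ n := by
  obtain rfl | hS := S.eq_empty_or_nonempty
  · simp
  have hS : (0 : ℚ≥0) < #S := by exact_mod_cast hS.card_pos
  have h := schwartz_zippel_totalDegree hp S
  rw [div_le_div_iff₀ (by positivity) hS] at h
  exact_mod_cast h

open scoped Classical in
theorem schwartz_zippel {F : Type*} [Field F] (N M : ℕ)
    (q : MvPolynomial (Fin N) F) (hq : q ≠ 0) (hdeg : q.totalDegree ≤ M)
    (T : Finset F) (hT : T.Nonempty) :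
    ((Fintype.piFinset fun _ : Fin N => T).filter
        (fun x => MvPolynomial.eval x q = 0)).card ≤ M * T.card ^ (N - 1) := by
  refine Nat.le_of_mul_le_mul_right ?_ hT.card_pos
  calc _ ≤ q.totalDegree * #T ^ N := q.card_zeros_mul_card_le_totalDegree_mul hq T
    _ ≤ M * #T ^ (N - 1 + 1) := by
      gcongr
      · exact hT.card_pos
      · omega
    _ = M * #T ^ (N - 1) * #T := by rw [pow_succ, mul_assoc]
end

section
/- With S an M×E matrix of rank M and R the generic rate matrix supported on the input relation ⊢, the polynomial det(SR) in the variables r_{jm} is nonzero if and only if there exists a child selection J : M → E such that the M×M submatrix of S with columns J(M) is invertible. -/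
/-!
Multilinearity of the determinant in the columns of `R` gives
`det (S R) = ∑_J (∏_m R_{J(m) m}) · det S_J` over all maps `J : M → E`. A nonzero summand forces
`J` to be injective (else `S_J` has two equal columns) and a child selection (else the product
contains a zero entry of `R`). Conversely, specialising `r_{jm}` to `1` if `j = J(m)` and to `0`
otherwise turns `S R` into `S_J`, so `det (S R)` cannot vanish when `det S_J` does not.
-/

open MvPolynomial

variable {K : Type*} [CommRing K] {m n : Type*}

namespace Matrix

theorem det_mul_eq_sum_prod_mul_det_submatrix [Fintype m] [DecidableEq m] [Fintype n]
    (A : Matrix m n K) (B : Matrix n m K) :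
    (A * B).det = ∑ J : m → n, (∏ i, B (J i) i) * (A.submatrix id J).det := by
  let d : (m → K) [⋀^m]→ₗ[K] K := detRowAlternating
  have hrows : (A * B)ᵀ = fun i => ∑ j, B j i • Aᵀ j := by
    ext i k
    simp [mul_apply, Finset.sum_apply, mul_comm]
  calc (A * B).det = d (fun i => ∑ j, B j i • Aᵀ j) := by rw [← det_transpose, hrows]; rfl
    _ = ∑ J : m → n, d (fun i => B (J i) i • Aᵀ (J i)) :=
        d.toMultilinearMap.map_sum fun i j => B j i • Aᵀ j
    _ = ∑ J : m → n, (∏ i, B (J i) i) * (A.submatrix id J).det := by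
        refine Finset.sum_congr rfl fun J _ => ?_
        rw [← det_transpose (A.submatrix id J)]
        exact d.toMultilinearMap.map_smul_univ (fun i => B (J i) i) (fun i => Aᵀ (J i))

theorem det_submatrix_eq_zero_of_not_injective [Fintype m] [DecidableEq m] (A : Matrix m n K)
    {J : m → n} (hJ : ¬Function.Injective J) : (A.submatrix id J).det = 0 := by
  obtain ⟨i, i', hii', hne⟩ := Function.not_injective_iff.mp hJ
  exact det_zero_of_column_eq hne fun k => by simp [hii']

theorem exists_injective_of_det_mul_ne_zero [Fintype m] [DecidableEq m] [Fintype n]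
    {A : Matrix m n K} {B : Matrix n m K} (h : (A * B).det ≠ 0) :
    ∃ J : m → n, Function.Injective J ∧ (∀ i, B (J i) i ≠ 0) ∧ (A.submatrix id J).det ≠ 0 := by
  rw [det_mul_eq_sum_prod_mul_det_submatrix] at h
  obtain ⟨J, -, hJ⟩ := Finset.exists_ne_zero_of_sum_ne_zero h
  have hdet := right_ne_zero_of_mul hJ
  exact ⟨J, not_imp_comm.mp (det_submatrix_eq_zero_of_not_injective A) hdet,
    fun i hi => left_ne_zero_of_mul hJ (Finset.prod_eq_zero (Finset.mem_univ i) hi), hdet⟩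

end Matrix

theorem map_eval_map_C_mul {l σ : Type*} [Fintype n] (A : Matrix m n K)
    (B : Matrix n l (MvPolynomial σ K)) (φ : σ → K) :
    (A.map (C : K → MvPolynomial σ K) * B).map (eval φ) = A * B.map (eval φ) := by
  ext
  simp [Matrix.mul_apply]

theorem map_eval_eq_one_submatrix [DecidableEq n] {inp : m → n → Prop}
    [∀ i j, Decidable (inp i j)] {R : Matrix n m (MvPolynomial (n × m) K)}
    (hR : ∀ j i, R j i = if inp i j then X (j, i) else 0) {J : m → n} (hJ : ∀ i, inp i (J i)) :
    R.map (eval fun p => if p.1 = J p.2 then 1 else 0) = (1 : Matrix n n K).submatrix id J := by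
  ext j i
  by_cases hj : j = J i
  · subst hj
    simp [hR, hJ, Matrix.one_apply]
  · simp only [Matrix.map_apply, Matrix.submatrix_apply, hR]
    split_ifs <;> simp [hj]

open scoped Classical in
theorem det_SR_nonzero_iff_child_selection_general (E M : ℕ) (inp : Fin M → Fin E → Prop)
    (S : Matrix (Fin M) (Fin E) ℝ)
    (R : Matrix (Fin E) (Fin M) (MvPolynomial (Fin E × Fin M) ℝ))
    (hR : ∀ j m, R j m = if inp m j then X (j, m) else 0) :
    (S.map (C : ℝ → MvPolynomial (Fin E × Fin M) ℝ) * R).det ≠ 0 ↔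
      ∃ J : Fin M → Fin E, Function.Injective J ∧ (∀ m, inp m (J m)) ∧
        (S.submatrix id J).det ≠ 0 := by
  constructor
  · intro h
    obtain ⟨J, hinj, hRne, hdet⟩ := Matrix.exists_injective_of_det_mul_ne_zero h
    refine ⟨J, hinj, fun i => by_contra fun hi => hRne i (by simp [hR, hi]), fun h0 => hdet ?_⟩
    have hC : ((S.map C).submatrix id J).det = C (S.submatrix id J).det :=
      (RingHom.map_det (C : ℝ →+* MvPolynomial (Fin E × Fin M) ℝ) _).symm
    rw [hC, h0, map_zero]
  · rintro ⟨J, -, hJ, hdet⟩ h0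
    let φ : Fin E × Fin M → ℝ := fun p => if p.1 = J p.2 then 1 else 0
    have hspec : (S.map (C : ℝ → MvPolynomial (Fin E × Fin M) ℝ) * R).map (eval φ) =
        S.submatrix id J := by
      rw [map_eval_map_C_mul, map_eval_eq_one_submatrix hR hJ]
      exact Matrix.mul_submatrix_one (Equiv.refl _) J S
    have h0φ := congrArg (eval φ) h0
    rw [RingHom.map_det, RingHom.mapMatrix_apply, hspec, map_zero] at h0φ
    exact hdet h0φ

open MvPolynomial in
open scoped Classical in
theorem det_SR_nonzero_iff_child_selection (E M : ℕ) (inp : Fin M → Fin E → Prop)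
    (S : Matrix (Fin M) (Fin E) ℝ) (hrank : S.rank = M)
    (R : Matrix (Fin E) (Fin M) (MvPolynomial (Fin E × Fin M) ℝ))
    (hR : ∀ j m, R j m = if inp m j then X (j, m) else 0) :
    (S.map (C : ℝ → MvPolynomial (Fin E × Fin M) ℝ) * R).det ≠ 0 ↔
      ∃ J : Fin M → Fin E, Function.Injective J ∧ (∀ m, inp m (J m)) ∧
        (S.submatrix id J).det ≠ 0 :=
  det_SR_nonzero_iff_child_selection_general E M inp S R hR
end

section
/- (Augmenticity, regularity part) Let a network (E₀, M₀) be a subnetwork of (E₁, M₁), so that the stoichiometric matrix S₁ satisfies S₁ restricted to rows M₀ and columns E₀ equals S₀, and S₁ restricted to rows M₁∖M₀ and columns E₀ is zero. Suppose there is a child selection J₀ : M₀ → E₀ with det S₀^{J₀(M₀)} ≠ 0 and a partial child selection J^∨ : M₁∖M₀ → E₁∖E₀ with det of the corresponding square submatrix of S₁ (rows M₁∖M₀, columns J^∨(M₁∖M₀)) nonzero. Then the combined map J₁ (equal to J₀ on M₀ and J^∨ on M₁∖M₀) is a child selection for the augmented network with det S₁^{J₁(M₁)} ≠ 0. -/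
namespace Matrix

variable {m₀ m₁ n₀ n₁ R : Type*}

theorem submatrix_sumMap_eq_fromBlocks (A : Matrix (m₀ ⊕ m₁) (n₀ ⊕ n₁) R)
    (f : m₀ → n₀) (g : m₁ → n₁) :
    A.submatrix id (Sum.map f g) =
      fromBlocks (A.toBlocks₁₁.submatrix id f) (A.toBlocks₁₂.submatrix id g)
        (A.toBlocks₂₁.submatrix id f) (A.toBlocks₂₂.submatrix id g) := by
  ext (i | i) (j | j) <;> rfl

theorem det_submatrix_sumMap_of_toBlocks₂₁_eq_zero [Fintype m₀] [Fintype m₁]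
    [DecidableEq m₀] [DecidableEq m₁] [CommRing R] (A : Matrix (m₀ ⊕ m₁) (n₀ ⊕ n₁) R)
    (hA : A.toBlocks₂₁ = 0) (f : m₀ → n₀) (g : m₁ → n₁) :
    (A.submatrix id (Sum.map f g)).det =
      (A.toBlocks₁₁.submatrix id f).det * (A.toBlocks₂₂.submatrix id g).det := by
  rw [submatrix_sumMap_eq_fromBlocks, hA]
  exact det_fromBlocks_zero₂₁ _ _ _

end Matrix

theorem augmenticity_regularity_general {M₀ Mn E₀ En : Type*}
    [Fintype M₀] [Fintype Mn]
    [DecidableEq M₀] [DecidableEq Mn]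
    (S₁ : Matrix (M₀ ⊕ Mn) (E₀ ⊕ En) ℝ)
    (inp : (M₀ ⊕ Mn) → (E₀ ⊕ En) → Prop)
    (hzero : ∀ (m : Mn) (e : E₀), S₁ (Sum.inr m) (Sum.inl e) = 0)
    (J₀ : M₀ → E₀) (hJ₀inj : Function.Injective J₀)
    (hJ₀inp : ∀ m, inp (Sum.inl m) (Sum.inl (J₀ m)))
    (hJ₀det : ((Matrix.of fun (m : M₀) (e : E₀) => S₁ (Sum.inl m) (Sum.inl e)).submatrix
        id J₀).det ≠ 0)
    (Jv : Mn → En) (hJvinj : Function.Injective Jv)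
    (hJvinp : ∀ m, inp (Sum.inr m) (Sum.inr (Jv m)))
    (hJvdet : ((Matrix.of fun (m : Mn) (e : En) => S₁ (Sum.inr m) (Sum.inr e)).submatrix
        id Jv).det ≠ 0) :
    Function.Injective (Sum.map J₀ Jv) ∧ (∀ m, inp m (Sum.map J₀ Jv m)) ∧
      (S₁.submatrix id (Sum.map J₀ Jv)).det ≠ 0 := by
  refine ⟨Sum.map_injective.mpr ⟨hJ₀inj, hJvinj⟩, Sum.forall.mpr ⟨hJ₀inp, hJvinp⟩, ?_⟩
  have hlower : S₁.toBlocks₂₁ = 0 := Matrix.ext hzero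
  rw [Matrix.det_submatrix_sumMap_of_toBlocks₂₁_eq_zero S₁ hlower]
  -- `toBlocks₁₁` and `toBlocks₂₂` unfold to the matrices of `hJ₀det` and `hJvdet`.
  exact mul_ne_zero hJ₀det hJvdet

theorem augmenticity_regularity {M₀ Mn E₀ En : Type*}
    [Fintype M₀] [Fintype Mn] [Fintype E₀] [Fintype En]
    [DecidableEq M₀] [DecidableEq Mn] [DecidableEq E₀] [DecidableEq En]
    (S₁ : Matrix (M₀ ⊕ Mn) (E₀ ⊕ En) ℝ)
    (inp : (M₀ ⊕ Mn) → (E₀ ⊕ En) → Prop)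
    (hzero : ∀ (m : Mn) (e : E₀), S₁ (Sum.inr m) (Sum.inl e) = 0)
    (J₀ : M₀ → E₀) (hJ₀inj : Function.Injective J₀)
    (hJ₀inp : ∀ m, inp (Sum.inl m) (Sum.inl (J₀ m)))
    (hJ₀det : ((Matrix.of fun (m : M₀) (e : E₀) => S₁ (Sum.inl m) (Sum.inl e)).submatrix
        id J₀).det ≠ 0)
    (Jv : Mn → En) (hJvinj : Function.Injective Jv)
    (hJvinp : ∀ m, inp (Sum.inr m) (Sum.inr (Jv m)))
    (hJvdet : ((Matrix.of fun (m : Mn) (e : En) => S₁ (Sum.inr m) (Sum.inr e)).submatrix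
        id Jv).det ≠ 0) :
    Function.Injective (Sum.map J₀ Jv) ∧ (∀ m, inp m (Sum.map J₀ Jv m)) ∧
      (S₁.submatrix id (Sum.map J₀ Jv)).det ≠ 0 :=
  augmenticity_regularity_general S₁ inp hzero J₀ hJ₀inj hJ₀inp hJ₀det Jv hJvinj hJvinp hJvdet
end
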